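/- Let Ω be a metrizable topological space, let μ be a finite Borel measure on Ω, and let (A_i)_{i∈I} be a finite Borel partition of Ω. Then there exists a family (f_i^k)_{i∈I, k∈ℕ} of continuous functions f_i^k : Ω → ℝ with 0 ≤ f_i^k ≤ 1 and Σ_{i∈I} f_i^k = 1 for every k, such that for each i ∈ I, f_i^k converges to the indicator function 1_{A_i} μ-almost everywhere as k → ∞. -/

import Mathlib

/-!
Each `A_i` is squeezed between a closed set `F ⊆ A_i` and an open set `U ⊇ A_i` with
`μ (U \ F)` small, and Urysohn's lemma gives a continuous `[0,1]`-valued function equal to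
`1_{A_i}` outside `U \ F`. Making the error summable in `k`, Borel–Cantelli shows that these
functions converge to `1_{A_i}` almost everywhere. Shifting them by `1/(k+1)` and dividing by their
sum over `i` produces a partition of unity without changing the limits, because the indicators
of a partition already sum to `1`.
-/

open Set Filter MeasureTheory Topology
open scoped ENNReal

theorem Finset.sum_indicator_apply_of_iUnion_eq_univ {X ι M : Type*} [Fintype ι]
    [AddCommMonoid M] {A : ι → Set X} (hdisj : Pairwise (Function.onFun Disjoint A))
    (hcover : ⋃ i, A i = Set.univ) (f : X → M) (x : X) :
    ∑ i, (A i).indicator f x = f x := by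
  rw [← Finset.indicator_biUnion_apply _ _ fun i _ j _ hij => hdisj hij]
  simp [hcover]

theorem ae_tendsto_of_tsum_measure_ne_ne_top {X β : Type*} [MeasurableSpace X]
    [TopologicalSpace β] {μ : Measure X} {g : ℕ → X → β} {h : X → β}
    (hg : ∑' k, μ {x | g k x ≠ h x} ≠ ∞) :
    ∀ᵐ x ∂μ, Tendsto (fun k => g k x) atTop (𝓝 (h x)) := by
  filter_upwards [ae_eventually_notMem hg] with x hx
  exact tendsto_const_nhds.congr' (hx.mono fun k hk => (not_not.mp hk).symm)

section Urysohn

variable {X : Type*} [TopologicalSpace X] [NormalSpace X] [MeasurableSpace X]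
  [OpensMeasurableSpace X] {μ : Measure X} [μ.WeaklyRegular] {A : Set X}

theorem MeasurableSet.exists_continuous_measure_ne_indicator_lt (hA : MeasurableSet A)
    (hμA : μ A ≠ ∞) {ε : ℝ≥0∞} (hε : ε ≠ 0) :
    ∃ g : C(X, ℝ), (∀ x, g x ∈ Icc (0 : ℝ) 1) ∧ μ {x | g x ≠ A.indicator 1 x} < ε := by
  have hε2 : ε / 2 ≠ 0 := (ENNReal.half_pos hε).ne'
  obtain ⟨F, hFA, hF, hμF⟩ := hA.exists_isClosed_sdiff_lt hμA hε2
  obtain ⟨U, hAU, hU, -, hμU⟩ := hA.exists_isOpen_sdiff_lt hμA hε2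
  obtain ⟨g, hg0, hg1, hg01⟩ := exists_continuous_zero_one_of_isClosed hU.isClosed_compl hF
    (disjoint_compl_left_iff_subset.mpr (hFA.trans hAU))
  refine ⟨g, hg01, ?_⟩
  have hsub : {x | g x ≠ A.indicator 1 x} ⊆ (U \ A) ∪ (A \ F) := by
    intro x hx
    by_cases hxA : x ∈ A
    · exact Or.inr ⟨hxA, fun hxF => hx (by simp [hg1 hxF, hxA])⟩
    · exact Or.inl ⟨by_contra fun hxU => hx (by simp [hg0 hxU, hxA]), hxA⟩
  calc μ {x | g x ≠ A.indicator 1 x} ≤ μ ((U \ A) ∪ (A \ F)) := measure_mono hsub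
    _ ≤ μ (U \ A) + μ (A \ F) := measure_union_le _ _
    _ < ε / 2 + ε / 2 := ENNReal.add_lt_add hμU hμF
    _ = ε := ENNReal.add_halves ε

theorem MeasurableSet.exists_seq_continuous_ae_tendsto_indicator (hA : MeasurableSet A)
    (hμA : μ A ≠ ∞) :
    ∃ g : ℕ → C(X, ℝ), (∀ k x, g k x ∈ Icc (0 : ℝ) 1) ∧
      ∀ᵐ x ∂μ, Tendsto (fun k => g k x) atTop (𝓝 (A.indicator 1 x)) := by
  choose g hg01 hμg using fun k : ℕ =>
    hA.exists_continuous_measure_ne_indicator_lt (μ := μ) hμA (pow_ne_zero k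
      (ENNReal.inv_ne_zero.mpr ENNReal.ofNat_ne_top) : (2⁻¹ : ℝ≥0∞) ^ k ≠ 0)
  refine ⟨g, hg01, ae_tendsto_of_tsum_measure_ne_ne_top (ne_top_of_le_ne_top ?_
    (ENNReal.tsum_le_tsum fun k => (hμg k).le))⟩
  rw [ENNReal.tsum_geometric, ENNReal.one_sub_inv_two, inv_inv]
  exact ENNReal.ofNat_ne_top

end Urysohn

theorem exists_sum_eq_one_tendsto_of_tendsto {X ι : Type*} [TopologicalSpace X] [Fintype ι]
    [Nonempty ι] (g : ι → ℕ → C(X, ℝ)) (hg : ∀ i k x, 0 ≤ g i k x) :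
    ∃ f : ι → ℕ → C(X, ℝ), (∀ i k x, f i k x ∈ Icc (0 : ℝ) 1) ∧ (∀ k x, ∑ i, f i k x = 1) ∧
      ∀ x (a : ι → ℝ), ∑ i, a i = 1 → (∀ i, Tendsto (fun k => g i k x) atTop (𝓝 (a i))) →
        ∀ i, Tendsto (fun k => f i k x) atTop (𝓝 (a i)) := by
  set u : ι → ℕ → X → ℝ := fun i k x => g i k x + 1 / (k + 1)
  have hu : ∀ i k x, 0 < u i k x := fun i k x => by have := hg i k x; positivity
  have hS : ∀ k x, 0 < ∑ j, u j k x := fun k x =>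
    Finset.sum_pos (fun j _ => hu j k x) Finset.univ_nonempty
  refine ⟨fun i k => ⟨fun x => u i k x / ∑ j, u j k x, ?_⟩, fun i k x => ⟨?_, ?_⟩, fun k x => ?_,
    fun x a ha hga i => ?_⟩
  · exact Continuous.div (by fun_prop) (by fun_prop) fun x => (hS k x).ne'
  · exact div_nonneg (hu i k x).le (hS k x).le
  · exact (div_le_one (hS k x)).mpr
      (Finset.single_le_sum (fun j _ => (hu j k x).le) (Finset.mem_univ i))
  · simp only [ContinuousMap.coe_mk]
    rw [← Finset.sum_div, div_self (hS k x).ne']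
  · have hua : ∀ j, Tendsto (fun k => u j k x) atTop (𝓝 (a j)) := fun j => by
      simpa only [add_zero] using (hga j).add tendsto_one_div_add_atTop_nhds_zero_nat
    have hSa : Tendsto (fun k => ∑ j, u j k x) atTop (𝓝 1) :=
      ha ▸ tendsto_finsetSum _ fun j _ => hua j
    have := (hua i).div hSa one_ne_zero
    rw [div_one] at this
    exact this

/-- On a metrizable space with a finite Borel measure, for every finite Borel partition
`(A_i)` there is a family `(f_i^k)` of continuous `[0,1]`-valued functions with
`Σ_i f_i^k = 1` such that for each `i`, `f_i^k → 1_{A_i}` `μ`-a.e. as `k → ∞`. -/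
theorem stmt8 {Ω : Type*} [TopologicalSpace Ω] [TopologicalSpace.MetrizableSpace Ω]
    [MeasurableSpace Ω] [BorelSpace Ω]
    (μ : Measure Ω) [IsFiniteMeasure μ]
    {I : Type*} [Fintype I] (A : I → Set Ω)
    (hmeas : ∀ i, MeasurableSet (A i))
    (hdisj : Pairwise (Function.onFun Disjoint A))
    (hcover : ⋃ i, A i = univ) :
    ∃ f : I → ℕ → C(Ω, ℝ),
      (∀ i k x, f i k x ∈ Icc (0:ℝ) 1) ∧
      (∀ k x, ∑ i, f i k x = 1) ∧
      ∀ i, ∀ᵐ x ∂μ, Tendsto (fun k => f i k x) atTop (𝓝 ((A i).indicator (1 : Ω → ℝ) x)) := by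
  obtain hΩ | ⟨⟨x₀⟩⟩ := isEmpty_or_nonempty Ω
  · exact ⟨0, fun _ _ x => isEmptyElim x, fun _ x => isEmptyElim x,
      fun _ => ae_of_all _ fun x => isEmptyElim x⟩
  have : Nonempty I := (mem_iUnion.mp (hcover ▸ mem_univ x₀)).nonempty
  choose g hg01 hg using fun i =>
    (hmeas i).exists_seq_continuous_ae_tendsto_indicator (measure_ne_top μ (A i))
  obtain ⟨f, hf01, hfsum, hf⟩ := exists_sum_eq_one_tendsto_of_tendsto g fun i k x => (hg01 i k x).1
  refine ⟨f, hf01, hfsum, fun i => ?_⟩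
  filter_upwards [ae_all_iff.mpr hg] with x hx
  exact hf x _ (Finset.sum_indicator_apply_of_iUnion_eq_univ hdisj hcover 1 x) hx i
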